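/- arXiv:1109.1272 — 4 statements merged into one kernel-verified Lean document; each statement's English description precedes it below -/
import Mathlib

section
/- For every 0 < η < 1 and every x ∈ ℝ, one has 0 ≤ ψ_η(x) ≤ |x| and |x| ≤ ψ_η(x) + √η. Equivalently, the function g_η(x) := |x| − ψ_η(x) satisfies 0 ≤ g_η(x) ≤ √η for all x ∈ ℝ. -/
/-- The auxiliary function ψ_η from Appendix A of the paper. -/
noncomputable def psi (η : ℝ) (x : ℝ) : ℝ :=
  (2 / Real.log (1 / η)) *
    ∫ y in (0:ℝ)..|x|,
      ∫ z in (0:ℝ)..y, (1 / z) * Set.indicator (Set.Icc η (Real.sqrt η)) (fun _ => (1:ℝ)) z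

/-- For , one has  and  for all real . -/
theorem psi_bounds (η : ℝ) (hη0 : 0 < η) (hη1 : η < 1) (x : ℝ) :
    0 ≤ psi η x ∧ psi η x ≤ |x| ∧ |x| ≤ psi η x + Real.sqrt η := by
  set s : ℝ := Real.sqrt η with hs_def
  have hs0 : 0 < s := Real.sqrt_pos.mpr hη0
  have hs1 : s ≤ 1 := Real.sqrt_le_one.mpr hη1.le
  have hηs : η ≤ s := by
    nlinarith [Real.sq_sqrt hη0.le, Real.sqrt_nonneg η]
  have hL'pos : 0 < Real.log (1 / η) := Real.log_pos (one_lt_one_div hη0 hη1)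
  set c : ℝ := 2 / Real.log (1 / η) with hc_def
  have hc0 : 0 < c := by positivity
  set f : ℝ → ℝ := fun z => (1 / z) * Set.indicator (Set.Icc η s) (fun _ => (1:ℝ)) z
    with hf_def
  set L : ℝ := Real.log s - Real.log η with hL_def
  have hL_eq : L = Real.log (1 / η) / 2 := by
    rw [hL_def, hs_def, Real.log_sqrt hη0.le, one_div, Real.log_inv]; ring
  have hcL : c * L = 1 := by
    rw [hL_eq, hc_def]; field_simp
  -- f equals the indicator of fun z => 1/z
  have hf_eq : f = Set.indicator (Set.Icc η s) (fun z => 1 / z) := by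
    funext z
    by_cases h : z ∈ Set.Icc η s <;>
      simp [hf_def, Set.indicator_of_mem, Set.indicator_of_notMem, h]
  have hf_nonneg : ∀ z, 0 ≤ f z := by
    intro z
    rw [hf_eq]
    by_cases h : z ∈ Set.Icc η s
    · rw [Set.indicator_of_mem h]
      have : 0 < z := lt_of_lt_of_le hη0 h.1
      positivity
    · rw [Set.indicator_of_notMem h]
  have hf_int : MeasureTheory.Integrable f := by
    rw [hf_eq]
    apply MeasureTheory.IntegrableOn.integrable_indicator _ measurableSet_Icc
    apply ContinuousOn.integrableOn_Icc
    intro z hz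
    exact (continuousOn_const.div continuousOn_id fun w hw =>
      (lt_of_lt_of_le hη0 hw.1).ne') z hz
  have hfint : ∀ a b : ℝ, IntervalIntegrable f MeasureTheory.volume a b :=
    fun a b => hf_int.intervalIntegrable
  set F : ℝ → ℝ := fun y => ∫ z in (0:ℝ)..y, f z with hF_def
  have hFcont : Continuous F := intervalIntegral.continuous_primitive hfint 0
  have hF_nonneg : ∀ y, 0 ≤ y → 0 ≤ F y := fun y hy =>
    intervalIntegral.integral_nonneg hy fun u _ => hf_nonneg u
  have hae : ∀ᵐ z : ℝ, z ≠ η := by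
    have h : MeasureTheory.volume ({η} : Set ℝ) = 0 := MeasureTheory.measure_singleton η
    rw [MeasureTheory.ae_iff]
    simp only [not_not, Set.setOf_eq_eq_singleton]; exact h
  -- F η = 0
  have hF0η : (∫ z in (0:ℝ)..η, f z) = 0 := by
    rw [intervalIntegral.integral_congr_ae (g := fun _ => (0:ℝ)) ?_,
      intervalIntegral.integral_zero]
    filter_upwards [hae] with z hz hmem
    rw [Set.uIoc_of_le hη0.le] at hmem
    have hzη : z < η := lt_of_le_of_ne hmem.2 hz
    have : z ∉ Set.Icc η s := fun h => absurd h.1 (not_le.mpr hzη)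
    simp [hf_def, Set.indicator_of_notMem this]
  -- F s = L
  have hFs : F s = L := by
    have hadd : (∫ z in (0:ℝ)..η, f z) + (∫ z in η..s, f z) = F s :=
      intervalIntegral.integral_add_adjacent_intervals (hfint 0 η) (hfint η s)
    have h2 : (∫ z in η..s, f z) = ∫ z in η..s, 1 / z := by
      apply intervalIntegral.integral_congr
      intro z hz
      rw [Set.uIcc_of_le hηs] at hz
      simp [hf_def, Set.indicator_of_mem hz]
    have h3 : (∫ z in η..s, (1:ℝ) / z) = Real.log (s / η) := by
      apply integral_one_div
      rw [Set.uIcc_of_le hηs]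
      intro h
      exact absurd h.1 (not_le.mpr hη0)
    rw [← hadd, hF0η, h2, h3, Real.log_div hs0.ne' hη0.ne', zero_add]
  -- F y = L for s ≤ y
  have hFconst : ∀ y, s ≤ y → F y = L := by
    intro y hy
    have hadd : (∫ z in (0:ℝ)..s, f z) + (∫ z in s..y, f z) = F y :=
      intervalIntegral.integral_add_adjacent_intervals (hfint 0 s) (hfint s y)
    have h2 : (∫ z in s..y, f z) = 0 := by
      rw [intervalIntegral.integral_congr_ae (g := fun _ => (0:ℝ)) ?_,
        intervalIntegral.integral_zero]
      apply MeasureTheory.ae_of_all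
      intro z hmem
      rw [Set.uIoc_of_le hy] at hmem
      have : z ∉ Set.Icc η s := fun h => absurd h.2 (not_le.mpr hmem.1)
      simp [hf_def, Set.indicator_of_notMem this]
    rw [← hadd, h2, add_zero]
    exact hFs
  -- F y ≤ L for 0 ≤ y
  have hF_le : ∀ y, 0 ≤ y → F y ≤ L := by
    intro y hy
    by_cases h : y ≤ s
    · have : F y ≤ F s := by
        apply intervalIntegral.integral_mono_interval le_rfl hy h
          (MeasureTheory.ae_of_all _ fun u => hf_nonneg u) (hfint 0 s)
      exact this.trans_eq hFs
    · exact (hFconst y (le_of_not_ge h)).le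
  -- rewrite psi
  have hψ : psi η x = c * ∫ y in (0:ℝ)..|x|, F y := rfl
  have hx0 : (0:ℝ) ≤ |x| := abs_nonneg x
  have hFI : ∀ a b : ℝ, IntervalIntegrable F MeasureTheory.volume a b :=
    fun a b => hFcont.intervalIntegrable a b
  have hInt_nonneg : 0 ≤ ∫ y in (0:ℝ)..|x|, F y :=
    intervalIntegral.integral_nonneg hx0 fun u hu => hF_nonneg u hu.1
  have hψ_nonneg : 0 ≤ psi η x := by
    rw [hψ]; exact mul_nonneg hc0.le hInt_nonneg
  refine ⟨hψ_nonneg, ?_, ?_⟩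
  · -- psi ≤ |x|
    rw [hψ]
    have hmono : (∫ y in (0:ℝ)..|x|, F y) ≤ ∫ y in (0:ℝ)..|x|, L := by
      apply intervalIntegral.integral_mono_on hx0 (hFI 0 |x|) intervalIntegrable_const
      intro u hu
      exact hF_le u hu.1
    have hconst : (∫ y in (0:ℝ)..|x|, L) = |x| * L := by
      rw [intervalIntegral.integral_const, smul_eq_mul, sub_zero]
    calc c * ∫ y in (0:ℝ)..|x|, F y ≤ c * (|x| * L) := by
          rw [← hconst]; exact mul_le_mul_of_nonneg_left hmono hc0.le
      _ = |x| * (c * L) := by ring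
      _ = |x| := by rw [hcL, mul_one]
  · -- |x| ≤ psi + s
    by_cases hcase : |x| ≤ s
    · linarith
    · have hsx : s ≤ |x| := (le_of_not_ge hcase)
      have hsplit : (∫ y in (0:ℝ)..s, F y) + (∫ y in s..|x|, F y)
          = ∫ y in (0:ℝ)..|x|, F y :=
        intervalIntegral.integral_add_adjacent_intervals (hFI 0 s) (hFI s |x|)
      have h2 : (∫ y in s..|x|, F y) = (|x| - s) * L := by
        rw [intervalIntegral.integral_congr (g := fun _ => L) ?_,
          intervalIntegral.integral_const, smul_eq_mul]
        intro u hu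
        rw [Set.uIcc_of_le hsx] at hu
        exact hFconst u hu.1
      have h1 : 0 ≤ ∫ y in (0:ℝ)..s, F y :=
        intervalIntegral.integral_nonneg hs0.le fun u hu => hF_nonneg u hu.1
      have : psi η x = c * (∫ y in (0:ℝ)..s, F y) + (|x| - s) * (c * L) := by
        rw [hψ, ← hsplit, h2]; ring
      rw [hcL, mul_one] at this
      nlinarith
end

section
/- For every 0 < η < 1, the function g_η(x) := |x| − ψ_η(x) is nondecreasing on [0, ∞): for all 0 ≤ x ≤ y one has x − ψ_η(x) ≤ y − ψ_η(y). -/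
/-!
ψ_η is `2 / log (1/η)` times the double primitive of the density `z⁻¹ · 1_{[η, √η]}`, whose
total mass is `log (√η / η) = log (1/η) / 2`. A single primitive of a nonnegative integrable
function never exceeds its total mass, so the double primitive is Lipschitz with that constant;
hence ψ_η is 1-Lipschitz on `[0, ∞)` and `x - ψ_η x` is nondecreasing there.
-/

open MeasureTheory Set Real intervalIntegral

lemma intervalIntegral_le_integral_of_nonneg {f : ℝ → ℝ} (hf : Integrable f) (hf0 : 0 ≤ f)
    (a b : ℝ) : ∫ z in a..b, f z ≤ ∫ z, f z := by
  rcases le_total a b with hab | hba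
  · rw [integral_of_le hab]
    exact setIntegral_le_integral hf (Filter.Eventually.of_forall hf0)
  · calc ∫ z in a..b, f z ≤ 0 := by
          rw [integral_symm]
          exact neg_nonpos.mpr (intervalIntegral.integral_nonneg_of_forall hba hf0)
      _ ≤ ∫ z, f z := MeasureTheory.integral_nonneg hf0

lemma integral_primitive_sub_le {f : ℝ → ℝ} (hf : Integrable f) (hf0 : 0 ≤ f) {x y : ℝ}
    (hxy : x ≤ y) :
    (∫ t in (0:ℝ)..y, ∫ z in (0:ℝ)..t, f z) - ∫ t in (0:ℝ)..x, ∫ z in (0:ℝ)..t, f z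
      ≤ (y - x) * ∫ z, f z := by
  have hF : Continuous fun t => ∫ z in (0:ℝ)..t, f z :=
    continuous_primitive (fun _ _ => hf.intervalIntegrable) 0
  rw [integral_interval_sub_left (hF.intervalIntegrable 0 y) (hF.intervalIntegrable 0 x)]
  calc (∫ t in x..y, ∫ z in (0:ℝ)..t, f z) ≤ ∫ _ in x..y, ∫ z, f z :=
        integral_mono_on hxy (hF.intervalIntegrable x y) intervalIntegrable_const
          fun t _ => intervalIntegral_le_integral_of_nonneg hf hf0 0 t
    _ = (y - x) * ∫ z, f z := by rw [intervalIntegral.integral_const, smul_eq_mul]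

noncomputable def psiDensity (η : ℝ) : ℝ → ℝ :=
  (Icc η (√η)).indicator fun z => z⁻¹

lemma psi_eq_integral_psiDensity (η x : ℝ) :
    psi η x = 2 / log (1 / η) * ∫ t in (0:ℝ)..|x|, ∫ z in (0:ℝ)..t, psiDensity η z := by
  simp only [psi, psiDensity, ← indicator_mul_right, one_div, mul_one]

lemma psiDensity_nonneg {η : ℝ} (hη : 0 ≤ η) : 0 ≤ psiDensity η :=
  fun _ => indicator_nonneg (fun _ hz => inv_nonneg.mpr (hη.trans hz.1)) _

lemma integrable_psiDensity {η : ℝ} (hη : 0 < η) : Integrable (psiDensity η) := by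
  rw [psiDensity, integrable_indicator_iff measurableSet_Icc]
  exact (continuousOn_inv₀.mono fun z hz => (hη.trans_le hz.1).ne').integrableOn_Icc

lemma integral_psiDensity {η : ℝ} (hη0 : 0 < η) (hη1 : η ≤ 1) :
    ∫ z, psiDensity η z = log (1 / η) / 2 := by
  have hle : η ≤ √η := (le_sqrt' hη0).mpr (by nlinarith)
  rw [psiDensity, MeasureTheory.integral_indicator measurableSet_Icc,
    integral_Icc_eq_integral_Ioc, ← integral_of_le hle,
    integral_inv_of_pos hη0 (sqrt_pos.mpr hη0),
    log_div (sqrt_pos.mpr hη0).ne' hη0.ne', log_sqrt hη0.le, one_div, log_inv]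
  ring

/-- For , the function  is nondecreasing on . -/
theorem g_eta_monotone (η : ℝ) (hη0 : 0 < η) (hη1 : η < 1) :
    ∀ x y : ℝ, 0 ≤ x → x ≤ y → x - psi η x ≤ y - psi η y := by
  intro x y hx hxy
  have hL : 0 < log (1 / η) := log_pos (one_lt_one_div hη0 hη1)
  have hG := integral_primitive_sub_le (integrable_psiDensity hη0)
    (psiDensity_nonneg hη0.le) hxy
  rw [integral_psiDensity hη0 hη1.le] at hG
  suffices psi η y - psi η x ≤ y - x by linarith
  rw [psi_eq_integral_psiDensity, psi_eq_integral_psiDensity, abs_of_nonneg hx,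
    abs_of_nonneg (hx.trans hxy), ← mul_sub]
  calc _ ≤ 2 / log (1 / η) * ((y - x) * (log (1 / η) / 2)) :=
        mul_le_mul_of_nonneg_left hG (by positivity)
    _ = y - x := by field_simp
end

section
/- Let α ≥ 0 and σ > 0, and set γ = √(α² + 2σ²) and c₁ = arctanh(−α/γ) (well-defined since γ > α ≥ 0). Define B : [0, ∞) → ℝ by B(t) = (1/σ²)·(α + γ·tanh(−(1/2)γt + c₁)). Then B(0) = 0 and B is differentiable with B'(t) = (1/2)σ²·B(t)² − α·B(t) − 1 for every t ≥ 0. -/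
/-!
Since `tanh' = 1 - tanh²`, the function `(α + γ tanh(-γt/2 + c)) / σ²` solves
`B' = σ² B² / 2 - α B - 1` for every `c` once `γ² = α² + 2σ²`. As `γ > |α|`, the
constant `c₁` is `artanh(-α/γ)`, so `tanh c₁ = -α/γ` and `B(0) = 0`.
-/

open Real

theorem Real.hasDerivAt_tanh (x : ℝ) : HasDerivAt tanh (1 - tanh x ^ 2) x := by
  have hcosh := (cosh_pos x).ne'
  have hquot := (hasDerivAt_sinh x).div (hasDerivAt_cosh x) hcosh
  rw [show tanh = sinh / cosh from funext tanh_eq_sinh_div_cosh]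
  refine hquot.congr_deriv ?_
  rw [Pi.div_apply]
  field_simp

theorem abs_lt_sqrt_sq_add {a b : ℝ} (hb : 0 < b) : |a| < √(a ^ 2 + b) :=
  (lt_sqrt (abs_nonneg a)).2 (by rw [sq_abs]; linarith)

noncomputable def riccatiTanh (α σ γ c t : ℝ) : ℝ :=
  (1 / σ ^ 2) * (α + γ * tanh (-(1 / 2) * γ * t + c))

theorem hasDerivAt_riccatiTanh {α σ γ : ℝ} (c t : ℝ) (hσ : σ ≠ 0)
    (hγ : γ ^ 2 = α ^ 2 + 2 * σ ^ 2) :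
    HasDerivAt (riccatiTanh α σ γ c)
      ((1 / 2) * σ ^ 2 * riccatiTanh α σ γ c t ^ 2 - α * riccatiTanh α σ γ c t - 1) t := by
  have hlin : HasDerivAt (fun s : ℝ => -(1 / 2) * γ * s + c) (-(1 / 2) * γ) t := by
    simpa using ((hasDerivAt_id t).const_mul (-(1 / 2) * γ)).add_const c
  have hB := (((hasDerivAt_tanh _).comp t hlin).const_mul γ |>.const_add α).const_mul (1 / σ ^ 2)
  refine hB.congr_deriv ?_
  simp only [riccatiTanh]
  field_simp
  linear_combination -hγ

theorem div_mem_Ioo_of_abs_lt {a b : ℝ} (h : |a| < b) : a / b ∈ Set.Ioo (-1) 1 := by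
  have hb : 0 < b := (abs_nonneg a).trans_lt h
  rw [Set.mem_Ioo, lt_div_iff₀ hb, div_lt_iff₀ hb]
  constructor <;> linarith [abs_lt.1 h]

theorem riccatiTanh_artanh_zero {α σ γ : ℝ} (hαγ : |α| < γ) :
    riccatiTanh α σ γ (artanh (-α / γ)) 0 = 0 := by
  have hγ : γ ≠ 0 := ((abs_nonneg α).trans_lt hαγ).ne'
  have hmem := div_mem_Ioo_of_abs_lt ((abs_neg α).trans_lt hαγ)
  rw [riccatiTanh, mul_zero, zero_add, tanh_artanh hmem, mul_div_cancel₀ _ hγ]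
  ring

theorem riccati_B_general (α σ : ℝ) (hσ : 0 < σ)
    (γ c₁ : ℝ) (hγ : γ = Real.sqrt (α ^ 2 + 2 * σ ^ 2))
    (hc₁ : c₁ = (1 / 2) * Real.log ((1 + -α / γ) / (1 - -α / γ)))
    (B : ℝ → ℝ)
    (hB : ∀ t : ℝ, B t = (1 / σ ^ 2) * (α + γ * Real.tanh (-(1 / 2) * γ * t + c₁))) :
    B 0 = 0 ∧ ∀ t : ℝ, 0 ≤ t →
      HasDerivAt B ((1 / 2) * σ ^ 2 * (B t) ^ 2 - α * B t - 1) t := by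
  have hαγ : |α| < γ := hγ ▸ abs_lt_sqrt_sq_add (by positivity)
  have hγsq : γ ^ 2 = α ^ 2 + 2 * σ ^ 2 := hγ ▸ sq_sqrt (by positivity)
  have hc₁ : c₁ = artanh (-α / γ) := by
    rw [hc₁, artanh_eq_half_log
      (Set.Ioo_subset_Icc_self (div_mem_Ioo_of_abs_lt ((abs_neg α).trans_lt hαγ)))]
  obtain rfl : B = riccatiTanh α σ γ c₁ := funext hB
  subst hc₁
  exact ⟨riccatiTanh_artanh_zero hαγ,
    fun t _ => hasDerivAt_riccatiTanh _ t hσ.ne' hγsq⟩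

/-- Riccati ODE for the exponent `B` in the closed-form large-pool loss (no-feedback case).
Here `c₁ = arctanh(−α/γ)` is written via `arctanh y = (1/2) log((1+y)/(1−y))`. -/
theorem riccati_B (α σ : ℝ) (hα : 0 ≤ α) (hσ : 0 < σ)
    (γ c₁ : ℝ) (hγ : γ = Real.sqrt (α ^ 2 + 2 * σ ^ 2))
    (hc₁ : c₁ = (1 / 2) * Real.log ((1 + -α / γ) / (1 - -α / γ)))
    (B : ℝ → ℝ)
    (hB : ∀ t : ℝ, B t = (1 / σ ^ 2) * (α + γ * Real.tanh (-(1 / 2) * γ * t + c₁))) :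
    B 0 = 0 ∧ ∀ t : ℝ, 0 ≤ t →
      HasDerivAt B ((1 / 2) * σ ^ 2 * (B t) ^ 2 - α * B t - 1) t :=
  riccati_B_general α σ hσ γ c₁ hγ hc₁ B hB
end

section
/- Let α ≥ 0, σ > 0 and λ̄ ∈ ℝ, and set γ = √(α² + 2σ²), c₁ = arctanh(−α/γ), c₂ = α/σ², d₁ = γ/σ², d₂ = −α·λ̄. Define B(t) = (1/σ²)·(α + γ·tanh(−(1/2)γt + c₁)) and A(t) = −c₂·d₂·t + (2·d₁·d₂/γ)·log( cosh(−(1/2)γt + c₁) / cosh(c₁) ). Then A(0) = 0 and A is differentiable with A'(t) = α·λ̄·B(t) for every t ≥ 0. -/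
open Real

theorem hasDerivAt_log_cosh_affine (a b t : ℝ) :
    HasDerivAt (fun t => log (cosh (a * t + b))) (a * tanh (a * t + b)) t := by
  have hu : HasDerivAt (fun t => a * t + b) a t := by
    simpa using ((hasDerivAt_id t).const_mul a).add_const b
  refine (((hasDerivAt_cosh _).comp t hu).log (cosh_pos _).ne').congr_deriv ?_
  rw [tanh_eq_sinh_div_cosh, Function.comp_apply]
  ring

theorem hasDerivAt_log_cosh_affine_div_cosh (a b t : ℝ) :
    HasDerivAt (fun t => log (cosh (a * t + b) / cosh b)) (a * tanh (a * t + b)) t := by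
  simp_rw [log_div (cosh_pos _).ne' (cosh_pos _).ne']
  exact (hasDerivAt_log_cosh_affine a b t).sub_const _

theorem ode_A_general (α σ lamBar : ℝ) (hσ : 0 < σ)
    (γ c₁ c₂ d₁ d₂ : ℝ)
    (hγ : γ = Real.sqrt (α ^ 2 + 2 * σ ^ 2))
    (hc₂ : c₂ = α / σ ^ 2) (hd₁ : d₁ = γ / σ ^ 2) (hd₂ : d₂ = -α * lamBar)
    (B A : ℝ → ℝ)
    (hB : ∀ t : ℝ, B t = (1 / σ ^ 2) * (α + γ * Real.tanh (-(1 / 2) * γ * t + c₁)))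
    (hA : ∀ t : ℝ, A t = -c₂ * d₂ * t +
      (2 * d₁ * d₂ / γ) * Real.log (Real.cosh (-(1 / 2) * γ * t + c₁) / Real.cosh c₁)) :
    A 0 = 0 ∧ ∀ t : ℝ, 0 ≤ t → HasDerivAt A (α * lamBar * B t) t := by
  have hγ0 : γ ≠ 0 := by
    rw [hγ]
    positivity
  refine ⟨by simp [hA, div_self (cosh_pos c₁).ne'], fun t _ => ?_⟩
  have hderiv := ((hasDerivAt_id t).const_mul (-c₂ * d₂)).add
    ((hasDerivAt_log_cosh_affine_div_cosh (-(1 / 2) * γ) c₁ t).const_mul (2 * d₁ * d₂ / γ))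
  rw [funext hA]
  refine hderiv.congr_deriv ?_
  rw [hB, hc₂, hd₁, hd₂]
  field_simp

/-- ODE for the exponent `A` in the closed-form large-pool loss (no-feedback case):
`A(0) = 0` and `A'(t) = α λ̄ B(t)`.  Here `c₁ = arctanh(−α/γ)` is written via
`arctanh y = (1/2) log((1+y)/(1−y))`. -/
theorem ode_A (α σ lamBar : ℝ) (hα : 0 ≤ α) (hσ : 0 < σ)
    (γ c₁ c₂ d₁ d₂ : ℝ)
    (hγ : γ = Real.sqrt (α ^ 2 + 2 * σ ^ 2))
    (hc₁ : c₁ = (1 / 2) * Real.log ((1 + -α / γ) / (1 - -α / γ)))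
    (hc₂ : c₂ = α / σ ^ 2) (hd₁ : d₁ = γ / σ ^ 2) (hd₂ : d₂ = -α * lamBar)
    (B A : ℝ → ℝ)
    (hB : ∀ t : ℝ, B t = (1 / σ ^ 2) * (α + γ * Real.tanh (-(1 / 2) * γ * t + c₁)))
    (hA : ∀ t : ℝ, A t = -c₂ * d₂ * t +
      (2 * d₁ * d₂ / γ) * Real.log (Real.cosh (-(1 / 2) * γ * t + c₁) / Real.cosh c₁)) :
    A 0 = 0 ∧ ∀ t : ℝ, 0 ≤ t → HasDerivAt A (α * lamBar * B t) t :=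
  ode_A_general α σ lamBar hσ γ c₁ c₂ d₁ d₂ hγ hc₂ hd₁ hd₂ B A hB hA
end
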